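/- Let G and H be co-Hopfian groups such that every abelian normal subgroup of G and of H is torsion. Suppose there exist groups K₁, K₂ that are torsion-free abelian, with embeddings G ↪ K₁ ⋊ G, H ↪ K₂ ⋊ H canonical, and suppose H embeds into K₁ ⋊ G and G embeds into K₂ ⋊ H. Then G ≅ H. -/
import Mathlib

lemma aux_inj_17 {G H K : Type*} [Group G] [Group H] [CommGroup K]
    (φ : G →* MulAut K)
    (hK : ∀ k : K, IsOfFinOrder k → k = 1)
    (hHab : ∀ N : Subgroup H, N.Normal → (∀ x y : N, Commute x y) →
      ∀ x : N, IsOfFinOrder x)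
    (f : H →* SemidirectProduct K G φ) (hf : Function.Injective f) :
    Function.Injective (SemidirectProduct.rightHom.comp f) := by
  rw [← MonoidHom.ker_eq_bot_iff]
  set N := (SemidirectProduct.rightHom.comp f).ker with hN
  have hmem : ∀ x : H, x ∈ N → ∃ k : K, f x = SemidirectProduct.inl k := by
    intro x hx
    have hx' : f x ∈ (SemidirectProduct.rightHom :
        SemidirectProduct K G φ →* G).ker := hx
    rw [← SemidirectProduct.range_inl_eq_ker_rightHom] at hx'
    obtain ⟨k, hk⟩ := hx'
    exact ⟨k, hk.symm⟩
  have hcomm : ∀ x y : N, Commute x y := by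
    intro x y
    obtain ⟨k₁, hk₁⟩ := hmem x x.2
    obtain ⟨k₂, hk₂⟩ := hmem y y.2
    have h1 : f ((x : H) * y) = f ((y : H) * x) := by
      rw [map_mul, map_mul, hk₁, hk₂, ← map_mul, ← map_mul, mul_comm]
    exact Subtype.ext (hf h1)
  have hfin := hHab N inferInstance hcomm
  rw [Subgroup.eq_bot_iff_forall]
  intro x hx
  obtain ⟨k, hk⟩ := hmem x hx
  obtain ⟨n, hn, hxn'⟩ := isOfFinOrder_iff_pow_eq_one.mp (hfin ⟨x, hx⟩)
  have hxn : x ^ n = 1 := by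
    have := congrArg (Subtype.val) hxn'
    simpa using this
  have hkn : k ^ n = 1 := by
    apply SemidirectProduct.inl_injective (φ := φ)
    rw [map_pow, map_one, ← hk, ← map_pow, hxn, map_one]
  have : k = 1 := hK k (isOfFinOrder_iff_pow_eq_one.mpr ⟨n, hn, hkn⟩)
  apply hf
  rw [hk, this, map_one, map_one]

/-- Abstract core of the main theorem: if `G`, `H` are co-Hopfian groups whose abelian
normal subgroups are all torsion, `K₁`, `K₂` are torsion-free abelian groups, `H` embeds
into `K₁ ⋊ G` and `G` embeds into `K₂ ⋊ H`, then `G ≅ H`. -/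
theorem stmt_17 {G H K₁ K₂ : Type*} [Group G] [Group H] [CommGroup K₁] [CommGroup K₂]
    (φ₁ : G →* MulAut K₁) (φ₂ : H →* MulAut K₂)
    (hK₁ : ∀ k : K₁, IsOfFinOrder k → k = 1)
    (hK₂ : ∀ k : K₂, IsOfFinOrder k → k = 1)
    (hcoG : ∀ e : G →* G, Function.Injective e → Function.Surjective e)
    (hcoH : ∀ e : H →* H, Function.Injective e → Function.Surjective e)
    (hGab : ∀ N : Subgroup G, N.Normal → (∀ x y : N, Commute x y) →
      ∀ x : N, IsOfFinOrder x)
    (hHab : ∀ N : Subgroup H, N.Normal → (∀ x y : N, Commute x y) →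
      ∀ x : N, IsOfFinOrder x)
    (f : H →* SemidirectProduct K₁ G φ₁) (hf : Function.Injective f)
    (g : G →* SemidirectProduct K₂ H φ₂) (hg : Function.Injective g) :
    Nonempty (G ≃* H) := by
  have hα := aux_inj_17 φ₁ hK₁ hHab f hf
  have hβ := aux_inj_17 φ₂ hK₂ hGab g hg
  set α := SemidirectProduct.rightHom.comp f with hαdef
  set β := SemidirectProduct.rightHom.comp g with hβdef
  have hcomp : Function.Injective (α.comp β) := hα.comp hβ
  have hsurj : Function.Surjective (α.comp β) := hcoG _ hcomp
  have hαsurj : Function.Surjective α := by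
    have h2 : Function.Surjective (⇑α ∘ ⇑β) := by simpa using hsurj
    exact h2.of_comp
  exact ⟨(MulEquiv.ofBijective α ⟨hα, hαsurj⟩).symm⟩
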